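/- arXiv:2006.02544 — 7 statements merged into one kernel-verified Lean document; each statement's English description precedes it below -/
import Mathlib

section
/- Let Z_1, ..., Z_{n+1} be exchangeable real-valued random variables. Then with probability at least 1-α, Z_{n+1} is at most the ⌈(1-α)(n+1)⌉-th smallest value among Z_1, ..., Z_n (where if ⌈(1-α)(n+1)⌉ > n the bound holds trivially). -/
open MeasureTheory Finset

noncomputable section

/-- The `k`-th smallest value (1-indexed) among `Z 0, ..., Z (n-1)`,
or `+∞` if the index `k` exceeds `n`. -/
def kthSmallest {n : ℕ} (Z : Fin n → ℝ) (k : ℕ) : EReal :=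
  if h : k - 1 < n then ((Z (Tuple.sort Z ⟨k - 1, h⟩) : ℝ) : EReal) else ⊤

/-! With `k = ⌈(1 - α)(n + 1)⌉` and `R j = #{i | Z i < Z j}`, the event `Z n ≤ Q̂` is exactly
`R n < k`. Pointwise, the `k` indices holding the `k` smallest values all have `R j < k`, and by
exchangeability every event `R j < k` has the same probability `p`; hence `k ≤ (n + 1) p`. -/

open scoped ENNReal

section StrictRank

variable {ι κ α : Type*} [Fintype ι] [Fintype κ] [LinearOrder α]

def strictRank (v : ι → α) (j : ι) : ℕ := #{i | v i < v j}

theorem strictRank_comp_equiv (v : ι → α) (e : κ ≃ ι) (j : κ) :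
    strictRank (v ∘ e) j = strictRank v (e j) :=
  card_equiv e (by simp)

theorem strictRank_last {n : ℕ} (z : Fin (n + 1) → α) :
    strictRank z (Fin.last n) = #{i : Fin n | z i.castSucc < z (Fin.last n)} := by
  simp only [strictRank, card_filter, Fin.sum_univ_castSucc, lt_irrefl, if_false, add_zero]

theorem Monotone.le_apply_iff_card_filter_lt_le {n : ℕ} {f : Fin n → α} (hf : Monotone f)
    (m : Fin n) (x : α) : x ≤ f m ↔ #{r | f r < x} ≤ m := by
  constructor
  · intro hx
    calc #{r | f r < x} ≤ #(Iio m) :=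
          card_le_card fun r hr => mem_Iio.2 <| lt_of_not_ge fun hmr =>
            (mem_filter.1 hr).2.not_ge (hx.trans (hf hmr))
      _ = m := Fin.card_Iio m
  · intro hcard
    by_contra! hx
    have : #(Iic m) ≤ #{r | f r < x} :=
      card_le_card fun r hr => mem_filter.2 ⟨mem_univ r, (hf (mem_Iic.1 hr)).trans_lt hx⟩
    rw [Fin.card_Iic] at this
    omega

theorem le_apply_sort_iff_card_filter_lt_le {n : ℕ} (z : Fin n → α) (m : Fin n) (x : α) :
    x ≤ z (Tuple.sort z m) ↔ #{i | z i < x} ≤ m := by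
  rw [← Function.comp_apply (f := z), (Tuple.monotone_sort z).le_apply_iff_card_filter_lt_le,
    card_equiv (Tuple.sort z) (t := {i | z i < x}) (by simp)]

theorem Fin.le_card_filter_strictRank_lt {n k : ℕ} (z : Fin n → α) (hk : k ≤ n) :
    k ≤ #{j | strictRank z j < k} := by
  have hrank (r : Fin n) : strictRank z (Tuple.sort z r) ≤ r :=
    (le_apply_sort_iff_card_filter_lt_le z r _).1 le_rfl
  calc k = #{r : Fin n | r < k} := by rw [Fin.card_filter_val_lt, min_eq_right hk]
    _ ≤ #{j | strictRank z j < k} :=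
      card_le_card_of_injOn (Tuple.sort z)
        (fun r hr => by simpa using (hrank r).trans_lt (mem_filter.1 hr).2)
        (Tuple.sort z).injective.injOn

theorem le_card_filter_strictRank_lt (z : ι → α) {k : ℕ} (hk : k ≤ Fintype.card ι) :
    k ≤ #{j | strictRank z j < k} := by
  set e := (Fintype.equivFin ι).symm
  calc k ≤ #{r | strictRank (z ∘ e) r < k} := Fin.le_card_filter_strictRank_lt _ hk
    _ = #{j | strictRank z j < k} := card_equiv e (by simp [strictRank_comp_equiv])

end StrictRank

theorem le_kthSmallest_iff_strictRank_lt {n k : ℕ} (z : Fin (n + 1) → ℝ) (hk : 1 ≤ k) :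
    (z (Fin.last n) : EReal) ≤ kthSmallest (fun i => z i.castSucc) k ↔
      strictRank z (Fin.last n) < k := by
  rw [strictRank_last]
  unfold kthSmallest
  split_ifs with h
  · rw [EReal.coe_le_coe_iff, le_apply_sort_iff_card_filter_lt_le (fun i => z i.castSucc),
      Fin.val_mk]
    omega
  · simp only [le_top, true_iff]
    exact ((card_le_univ _).trans_eq (Fintype.card_fin n)).trans_lt (by omega)

section Exchangeable

variable {Ω ι α : Type*} [MeasurableSpace Ω] {μ : Measure Ω} [MeasurableSpace α]

def Exchangeable (μ : Measure Ω) (X : Ω → ι → α) : Prop :=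
  ∀ σ : Equiv.Perm ι, μ.map (fun ω => X ω ∘ σ) = μ.map X

theorem Exchangeable.measure_preimage_comp_perm {X : Ω → ι → α} (hX : Exchangeable μ X)
    (hXm : Measurable X) (σ : Equiv.Perm ι) {S : Set (ι → α)} (hS : MeasurableSet S) :
    μ ((fun ω => X ω ∘ σ) ⁻¹' S) = μ (X ⁻¹' S) := by
  have hXσm : Measurable fun ω => X ω ∘ σ := by fun_prop
  rw [← Measure.map_apply hXσm hS, hX σ, Measure.map_apply hXm hS]

variable [Fintype ι] [LinearOrder α] [TopologicalSpace α] [OrderClosedTopology α]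
  [SecondCountableTopology α] [OpensMeasurableSpace α]

theorem measurable_strictRank (j : ι) : Measurable fun v : ι → α => strictRank v j := by
  simp only [strictRank, card_filter]
  exact Finset.measurable_sum _ fun i _ => Measurable.ite
    (measurableSet_lt (measurable_pi_apply i) (measurable_pi_apply j)) measurable_const
    measurable_const

theorem Exchangeable.measure_strictRank_lt_eq {X : Ω → ι → α} (hX : Exchangeable μ X)
    (hXm : Measurable X) (j j' : ι) (k : ℕ) :
    μ {ω | strictRank (X ω) j < k} = μ {ω | strictRank (X ω) j' < k} := by
  classical
  have hswap : {ω | strictRank (X ω) j < k} =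
      (fun ω => X ω ∘ Equiv.swap j j') ⁻¹' {v | strictRank v j' < k} := by
    ext ω
    simp [strictRank_comp_equiv]
  rw [hswap]
  exact hX.measure_preimage_comp_perm hXm _ (measurable_strictRank j' measurableSet_Iio)

open scoped Classical in
theorem natCast_le_sum_measure_of_le_card [IsProbabilityMeasure μ] {A : ι → Set Ω}
    (hA : ∀ j, MeasurableSet (A j)) {k : ℕ} (hk : ∀ ω, k ≤ #{j | ω ∈ A j}) :
    (k : ℝ≥0∞) ≤ ∑ j, μ (A j) := by
  have hcount (ω : Ω) : (#{j | ω ∈ A j} : ℝ≥0∞) = ∑ j, (A j).indicator 1 ω := by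
    rw [card_filter]
    push_cast
    simp [Set.indicator_apply]
  calc (k : ℝ≥0∞) = ∫⁻ _, (k : ℝ≥0∞) ∂μ := by simp
    _ ≤ ∫⁻ ω, ∑ j, (A j).indicator 1 ω ∂μ :=
      lintegral_mono fun ω => (hcount ω) ▸ Nat.cast_le.2 (hk ω)
    _ = ∑ j, μ (A j) := by
      rw [lintegral_finsetSum _ fun j _ => measurable_one.indicator (hA j)]
      simp_rw [lintegral_indicator_one (hA _)]

theorem Exchangeable.natCast_le_card_mul_measure_strictRank_lt [IsProbabilityMeasure μ]
    {X : Ω → ι → α} (hX : Exchangeable μ X) (hXm : Measurable X) (j : ι) {k : ℕ}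
    (hk : k ≤ Fintype.card ι) :
    (k : ℝ≥0∞) ≤ Fintype.card ι * μ {ω | strictRank (X ω) j < k} := by
  calc (k : ℝ≥0∞) ≤ ∑ j', μ {ω | strictRank (X ω) j' < k} :=
        natCast_le_sum_measure_of_le_card
          (fun j' => hXm (measurable_strictRank j' measurableSet_Iio))
          fun ω => by simpa using le_card_filter_strictRank_lt (X ω) hk
    _ = Fintype.card ι * μ {ω | strictRank (X ω) j < k} := by
      simp [hX.measure_strictRank_lt_eq hXm _ j]

end Exchangeable

/-- If `Z 0, ..., Z n` are exchangeable real random variables and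
`Q̂` is the `⌈(1-α)(n+1)⌉`-th smallest value among `Z 0, ..., Z (n-1)`
(or `+∞` if the index exceeds `n`), then `P[Z n ≤ Q̂] ≥ 1 - α`. -/
theorem split_conformal_lower_bound
    {Ω : Type*} [MeasurableSpace Ω] (ℙ : Measure Ω) [IsProbabilityMeasure ℙ]
    (n : ℕ) (Z : Fin (n + 1) → Ω → ℝ) (hZmeas : ∀ i, Measurable (Z i))
    (hexch : ∀ σ : Equiv.Perm (Fin (n + 1)),
      Measure.map (fun ω => fun i => Z (σ i) ω) ℙ = Measure.map (fun ω => fun i => Z i ω) ℙ)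
    (α : ℝ) (hα : α ∈ Set.Ioo (0 : ℝ) 1) :
    ENNReal.ofReal (1 - α) ≤
      ℙ {ω | (Z (Fin.last n) ω : EReal) ≤
        kthSmallest (fun i : Fin n => Z i.castSucc ω) ⌈(1 - α) * (n + 1)⌉₊} := by
  obtain ⟨hα0, hα1⟩ := hα
  set k := ⌈(1 - α) * (n + 1)⌉₊
  have hk_pos : 1 ≤ k := Nat.ceil_pos.2 (by nlinarith)
  have hk_le : k ≤ n + 1 := Nat.ceil_le.2 (by push_cast; nlinarith)
  have hevent : {ω | (Z (Fin.last n) ω : EReal) ≤ kthSmallest (fun i : Fin n => Z i.castSucc ω) k}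
      = {ω | strictRank (fun i => Z i ω) (Fin.last n) < k} :=
    Set.ext fun ω => le_kthSmallest_iff_strictRank_lt (fun i => Z i ω) hk_pos
  have hcount : (k : ℝ≥0∞) ≤ (n + 1) * ℙ {ω | strictRank (fun i => Z i ω) (Fin.last n) < k} := by
    simpa using Exchangeable.natCast_le_card_mul_measure_strictRank_lt (X := fun ω i => Z i ω)
      hexch (measurable_pi_lambda _ hZmeas) (Fin.last n) (by simpa using hk_le)
  have hquantile : (n + 1) * ENNReal.ofReal (1 - α) ≤ k := by
    calc (n + 1 : ℝ≥0∞) * ENNReal.ofReal (1 - α) = ENNReal.ofReal ((1 - α) * (n + 1)) := by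
          rw [ENNReal.ofReal_mul (by linarith), mul_comm]
          congr
          exact_mod_cast (ENNReal.ofReal_natCast (n + 1)).symm
      _ ≤ k := ENNReal.ofReal_le_of_le_toReal (by simpa using Nat.le_ceil _)
  rw [hevent]
  exact (ENNReal.mul_le_mul_iff_right (by positivity) (by simp)).1 (hquantile.trans hcount)
end
end

section
/- Let Z_1, ..., Z_{n+1} be exchangeable real-valued random variables that are almost surely distinct. Then P[Z_{n+1} ≤ Q̂_{1-α}] ≤ 1-α + 1/(n+1), where Q̂_{1-α} is the ⌈(1-α)(n+1)⌉-th smallest value among Z_1,...,Z_n. -/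
open MeasureTheory Finset

noncomputable section

/-! With almost surely distinct values, the ranks of `Z 0, ..., Z n` are a.s. a permutation of
`0, ..., n`, so at most `k` of them are below `k`. By exchangeability every index has the same
probability of having rank below `k`, which is therefore at most `k / (n + 1)`. Since at most
`k - 1` of `Z 0, ..., Z (n - 1)` lie strictly below `Q̂`, the event `Z n ≤ Q̂` forces the rank of
`Z n` below `k = ⌈(1 - α)(n + 1)⌉`, and `k / (n + 1) ≤ 1 - α + 1 / (n + 1)`. -/

open scoped ENNReal
open Function

section Rank

variable {ι α : Type*} [Fintype ι] [LinearOrder α]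

/-- The `0`-based rank of `z j` when `z` is injective. -/
def rank (z : ι → α) (j : ι) : ℕ := #{i | z i < z j}

theorem rank_lt_rank_of_lt {z : ι → α} {a b : ι} (h : z a < z b) : rank z a < rank z b := by
  refine card_lt_card ((ssubset_iff_of_subset ?_).2 ⟨a, by simpa using h, by simp⟩)
  exact monotone_filter_right _ fun i _ hi => hi.trans h

theorem rank_injective {z : ι → α} (hz : Injective z) : Injective (rank z) := by
  intro a b hab
  by_contra hne
  rcases (hz.ne hne).lt_or_gt with h | h
  · exact (rank_lt_rank_of_lt h).ne hab
  · exact (rank_lt_rank_of_lt h).ne' hab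

theorem card_rank_lt_le {z : ι → α} (hz : Injective z) (k : ℕ) : #{j | rank z j < k} ≤ k := by
  simpa using card_le_card_of_injOn (rank z) (t := range k) (fun j hj => by simpa using hj)
    (rank_injective hz).injOn

theorem rank_comp_perm (z : ι → α) (σ : Equiv.Perm ι) (j : ι) :
    rank (z ∘ σ) j = rank z (σ j) :=
  card_equiv σ (by simp)

end Rank

section KthSmallest

variable {α : Type*} [LinearOrder α] {n : ℕ}

theorem card_lt_sort_le (w : Fin n → α) (m : Fin n) :
    #{i | w i < w (Tuple.sort w m)} ≤ m := by
  calc #{i | w i < w (Tuple.sort w m)} ≤ #((Iio m).map (Tuple.sort w).toEmbedding) := by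
        refine card_le_card fun i hi => ?_
        simp only [mem_filter, mem_univ, true_and] at hi
        refine mem_map.2 ⟨(Tuple.sort w).symm i, mem_Iio.2 ?_, by simp⟩
        by_contra! hmi
        have hmono := Tuple.monotone_sort w hmi
        simp only [comp_apply, Equiv.apply_symm_apply] at hmono
        exact hmono.not_gt hi
    _ = m := by simp

theorem rank_last (z : Fin (n + 1) → α) :
    rank z (Fin.last n) = #{i : Fin n | z i.castSucc < z (Fin.last n)} := by
  rw [rank, card_filter, Fin.sum_univ_castSucc, card_filter]
  simp

theorem rank_last_lt_of_le_kthSmallest {z : Fin (n + 1) → ℝ} {k : ℕ} (hk : 1 ≤ k)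
    (h : (z (Fin.last n) : EReal) ≤ kthSmallest (fun i : Fin n => z i.castSucc) k) :
    rank z (Fin.last n) < k := by
  rw [rank_last]
  unfold kthSmallest at h
  split_ifs at h with hkn
  · set w : Fin n → ℝ := fun i => z i.castSucc
    have hle : z (Fin.last n) ≤ w (Tuple.sort w ⟨k - 1, hkn⟩) := by exact_mod_cast h
    calc #{i | w i < z (Fin.last n)} ≤ #{i | w i < w (Tuple.sort w ⟨k - 1, hkn⟩)} :=
          card_le_card (monotone_filter_right _ fun i _ hi => hi.trans_le hle)
      _ ≤ k - 1 := card_lt_sort_le w _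
      _ < k := by omega
  · exact (card_filter_le _ _).trans_lt (by simp; omega)

end KthSmallest

section Probability

variable {Ω ι : Type*} [MeasurableSpace Ω] {μ : Measure Ω} [Fintype ι]

theorem measurableSet_rank_lt (j : ι) (k : ℕ) : MeasurableSet {z : ι → ℝ | rank z j < k} := by
  have : Measurable fun z : ι → ℝ => rank z j := by
    simp_rw [rank, card_filter]
    exact Finset.measurable_sum _ fun i _ =>
      Measurable.ite (measurableSet_lt (measurable_pi_apply i) (measurable_pi_apply j))
        measurable_const measurable_const
  exact this (measurableSet_Iio (a := k))

theorem ae_injective_of_measure_eq_zero {β : Type*} {X : Ω → ι → β}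
    (h : ∀ i j, i ≠ j → μ {ω | X ω i = X ω j} = 0) : ∀ᵐ ω ∂μ, Injective (X ω) := by
  have hpair : ∀ i j, ∀ᵐ ω ∂μ, X ω i = X ω j → i = j := fun i j => by
    by_cases hij : i = j
    · exact ae_of_all _ fun _ _ => hij
    · exact (measure_eq_zero_iff_ae_notMem.1 (h i j hij)).mono fun ω hω heq => (hω heq).elim
  filter_upwards [ae_all_iff.2 fun i => ae_all_iff.2 (hpair i)] with ω hω i j using hω i j

open scoped Classical in
theorem sum_measure_le_of_ae_card_le {A : ι → Set Ω} (hA : ∀ i, MeasurableSet (A i)) {k : ℕ}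
    (h : ∀ᵐ ω ∂μ, #{i | ω ∈ A i} ≤ k) : ∑ i, μ (A i) ≤ k * μ Set.univ := by
  calc ∑ i, μ (A i) = ∫⁻ ω, ∑ i, (A i).indicator 1 ω ∂μ := by
        rw [lintegral_finsetSum _ fun i _ => measurable_one.indicator (hA i)]
        simp only [lintegral_indicator_one (hA _)]
    _ = ∫⁻ ω, (#{i | ω ∈ A i} : ℝ≥0∞) ∂μ := by
        simp only [Set.indicator_apply, Pi.one_apply, sum_boole]
    _ ≤ ∫⁻ _, (k : ℝ≥0∞) ∂μ := lintegral_mono_ae (h.mono fun ω hω => by exact_mod_cast hω)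
    _ = k * μ Set.univ := lintegral_const _

variable {X : Ω → ι → ℝ}

theorem measure_rank_lt_eq_of_exchangeable (hX : Measurable X)
    (hexch : ∀ σ : Equiv.Perm ι, μ.map (fun ω => X ω ∘ σ) = μ.map X) (k : ℕ) (i j : ι) :
    μ {ω | rank (X ω) i < k} = μ {ω | rank (X ω) j < k} := by
  classical
  have hσ : {ω | rank (X ω) i < k} = (fun ω => X ω ∘ Equiv.swap i j) ⁻¹' {z | rank z j < k} := by
    ext ω
    simp [rank_comp_perm]
  have hXσ : Measurable fun ω => X ω ∘ Equiv.swap i j :=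
    measurable_pi_lambda _ fun l => (measurable_pi_apply _).comp hX
  rw [hσ, ← Measure.map_apply hXσ (measurableSet_rank_lt j k), hexch,
    Measure.map_apply hX (measurableSet_rank_lt j k)]
  rfl

theorem card_mul_measure_rank_lt_le [IsProbabilityMeasure μ] (hX : Measurable X)
    (hexch : ∀ σ : Equiv.Perm ι, μ.map (fun ω => X ω ∘ σ) = μ.map X)
    (hinj : ∀ᵐ ω ∂μ, Injective (X ω)) (k : ℕ) (j : ι) :
    Fintype.card ι * μ {ω | rank (X ω) j < k} ≤ k := by
  calc Fintype.card ι * μ {ω | rank (X ω) j < k} = ∑ i, μ {ω | rank (X ω) i < k} := by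
        simp [measure_rank_lt_eq_of_exchangeable hX hexch k _ j]
    _ ≤ k * μ Set.univ := sum_measure_le_of_ae_card_le
        (fun i => hX (measurableSet_rank_lt i k))
        (hinj.mono fun ω hω => by convert card_rank_lt_le hω k using 2; ext; simp)
    _ = k := by simp

end Probability

theorem natCeil_div_le_ofReal {α : ℝ} (hα : α < 1) (n : ℕ) :
    (⌈(1 - α) * (n + 1)⌉₊ : ℝ≥0∞) / (n + 1) ≤ ENNReal.ofReal (1 - α + 1 / (n + 1)) := by
  have hceil := Nat.ceil_lt_add_one (by nlinarith : 0 ≤ (1 - α) * (n + 1))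
  rw [← ENNReal.ofReal_natCast, ← ENNReal.ofReal_natCast n, ← ENNReal.ofReal_one,
    ← ENNReal.ofReal_add n.cast_nonneg zero_le_one, ← ENNReal.ofReal_div_of_pos (by positivity)]
  refine ENNReal.ofReal_le_ofReal ?_
  rw [div_le_iff₀ (by positivity)]
  field_simp
  linarith

/-- If `Z 0, ..., Z n` are exchangeable and almost surely distinct, and
`Q̂` is the `⌈(1-α)(n+1)⌉`-th smallest value among `Z 0, ..., Z (n-1)`
(or `+∞` if the index exceeds `n`), then `P[Z n ≤ Q̂] ≤ 1 - α + 1/(n+1)`. -/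
theorem split_conformal_upper_bound
    {Ω : Type*} [MeasurableSpace Ω] (ℙ : Measure Ω) [IsProbabilityMeasure ℙ]
    (n : ℕ) (Z : Fin (n + 1) → Ω → ℝ) (hZmeas : ∀ i, Measurable (Z i))
    (hexch : ∀ σ : Equiv.Perm (Fin (n + 1)),
      Measure.map (fun ω => fun i => Z (σ i) ω) ℙ = Measure.map (fun ω => fun i => Z i ω) ℙ)
    (hdistinct : ∀ i j : Fin (n + 1), i ≠ j → ℙ {ω | Z i ω = Z j ω} = 0)
    (α : ℝ) (hα : α ∈ Set.Ioo (0 : ℝ) 1) :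
    ℙ {ω | (Z (Fin.last n) ω : EReal) ≤
        kthSmallest (fun i : Fin n => Z i.castSucc ω) ⌈(1 - α) * (n + 1)⌉₊} ≤
      ENNReal.ofReal (1 - α + 1 / (n + 1)) := by
  set k := ⌈(1 - α) * (n + 1)⌉₊
  have hk : 1 ≤ k := Nat.one_le_ceil_iff.2 (mul_pos (sub_pos.2 hα.2) n.cast_add_one_pos)
  have hrank := card_mul_measure_rank_lt_le (measurable_pi_lambda _ hZmeas) hexch
    (ae_injective_of_measure_eq_zero hdistinct) k (Fin.last n)
  calc _ ≤ ℙ {ω | rank (fun i => Z i ω) (Fin.last n) < k} :=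
        measure_mono fun ω hω => rank_last_lt_of_le_kthSmallest hk hω
    _ ≤ k / (n + 1) := by
        rw [ENNReal.le_div_iff_mul_le (by simp) (by simp), mul_comm]
        simpa using hrank
    _ ≤ ENNReal.ofReal (1 - α + 1 / (n + 1)) := natCeil_div_le_ofReal hα.2 n
end
end

section
/- Let π be a probability vector on {1,...,C}, let τ ∈ (0,1], let U ~ Uniform(0,1), and define the randomized set S(U;π,τ) to be the top L(π,τ)−1 labels if U ≤ V(π,τ) and the top L(π,τ) labels otherwise, where V(π,τ) = (∑_{c=1}^{L(π,τ)} π_(c) − τ)/π_(L(π,τ)). If Y is drawn from π independently of U, then P[Y ∈ S(U;π,τ)] = τ. -/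
open MeasureTheory Finset

noncomputable section

/-- Number of labels with strictly larger probability than `y`. -/
def nAbove {C : ℕ} (π : Fin C → ℝ) (y : Fin C) : ℕ :=
  (Finset.univ.filter (fun y' => π y < π y')).card

/-- The set of labels attaining the `c` largest probabilities
(well-defined as a set of size `min c C` when the entries of `π` are distinct). -/
def topSet {C : ℕ} (π : Fin C → ℝ) (c : ℕ) : Finset (Fin C) :=
  Finset.univ.filter (fun y => nAbove π y < c)

/-- The `r`-th largest entry of `π` (0-indexed: `sortedDesc π 0 = π_(1)`),
and `0` if `r` is out of range. -/
def sortedDesc {C : ℕ} (π : Fin C → ℝ) (r : ℕ) : ℝ :=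
  if h : r < C then π ((Tuple.sort π) (Fin.rev ⟨r, h⟩)) else 0

/-- Sum of the `c` largest entries of `π`: `π_(1) + ... + π_(c)`. -/
def topSum {C : ℕ} (π : Fin C → ℝ) (c : ℕ) : ℝ :=
  ∑ r ∈ Finset.range c, sortedDesc π r

/-- Generalized conditional quantile `L(π, τ) = min {c ∈ {1,...,C} : π_(1) + ... + π_(c) ≥ τ}`. -/
def Lgen {C : ℕ} (π : Fin C → ℝ) (τ : ℝ) : ℕ :=
  sInf {c : ℕ | 1 ≤ c ∧ τ ≤ topSum π c}

/-- `V(π, τ) = (∑_{c=1}^{L(π,τ)} π_(c) − τ) / π_(L(π,τ))`. -/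
def Vgen {C : ℕ} (π : Fin C → ℝ) (τ : ℝ) : ℝ :=
  (topSum π (Lgen π τ) - τ) / sortedDesc π (Lgen π τ - 1)

/-- The randomized oracle prediction set `S(u; π, τ)`: the top `L(π,τ) − 1` labels
if `u ≤ V(π,τ)`, and the top `L(π,τ)` labels otherwise. -/
def Sgen {C : ℕ} (u : ℝ) (π : Fin C → ℝ) (τ : ℝ) : Finset (Fin C) :=
  if u ≤ Vgen π τ then topSet π (Lgen π τ - 1) else topSet π (Lgen π τ)

/-- The generalized inverse quantile conformity score
`E(y, u; π) = min {τ ∈ [0,1] : y ∈ S(u; π, τ)}`. -/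
def Egen {C : ℕ} (y : Fin C) (u : ℝ) (π : Fin C → ℝ) : ℝ :=
  sInf {τ : ℝ | τ ∈ Set.Icc (0 : ℝ) 1 ∧ y ∈ Sgen u π τ}

/-!
Ranking the labels with `Tuple.sort`, the top-`c` set carries mass `π_(1) + ⋯ + π_(c)`.
Given `U`, the set `S(U; π, τ)` is the top `L - 1` labels with probability `V` and the top `L`
labels with probability `1 - V`, so it covers `Y` with probability
`V (π_(1) + ⋯ + π_(L-1)) + (1 - V) (π_(1) + ⋯ + π_(L)) = π_(1) + ⋯ + π_(L) - V π_(L)`,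
and `V` is chosen precisely so that this equals `τ`.
-/

section Ranking

variable {C : ℕ} (π : Fin C → ℝ)

lemma nAbove_sort_rev (hinj : Function.Injective π) (r : Fin C) :
    nAbove π (Tuple.sort π r.rev) = r := by
  set σ := Tuple.sort π
  have hσ : StrictMono (π ∘ σ) :=
    (Tuple.monotone_sort π).strictMono_of_injective (hinj.comp σ.injective)
  have hfilter : univ.filter (fun y => π (σ r.rev) < π y) = (Ioi r.rev).map σ.toEmbedding := by
    rw [← Finset.map_univ_equiv σ, Finset.filter_map]
    congr 1
    ext j
    simpa using hσ.lt_iff_lt (a := r.rev) (b := j)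
  rw [nAbove, hfilter, card_map, Fin.card_Ioi, Fin.val_rev]
  omega

lemma topSum_eq_sum_fin (c : ℕ) :
    topSum π c = ∑ r : Fin C, if (r : ℕ) < c then sortedDesc π r else 0 := by
  have hzero : ∀ r ∈ range c, r ∉ (range c).filter (· < C) → sortedDesc π r = 0 := by
    intro r _ hr
    simp_all [sortedDesc]
  rw [topSum, ← sum_subset (filter_subset _ _) hzero,
    Fin.sum_univ_eq_sum_range (fun r => if r < c then sortedDesc π r else 0), ← sum_filter]
  congr 1
  ext r
  simp only [mem_filter, mem_range]
  omega

lemma sum_topSet (hinj : Function.Injective π) (c : ℕ) :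
    ∑ y ∈ topSet π c, π y = topSum π c := by
  let e : Fin C ≃ Fin C := Fin.revPerm.trans (Tuple.sort π)
  rw [topSet, sum_filter, topSum_eq_sum_fin, ← e.sum_comp]
  refine sum_congr rfl fun r _ => ?_
  have hsorted : sortedDesc π r = π (e r) := by simp [sortedDesc, e]
  simp [e, nAbove_sort_rev π hinj, hsorted]

lemma topSet_of_le {c : ℕ} (h : C ≤ c) : topSet π c = univ := by
  refine eq_univ_of_forall fun y => mem_filter.2 ⟨mem_univ y, lt_of_lt_of_le ?_ h⟩
  exact (card_lt_card (s := univ.filter (fun y' => π y < π y'))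
    (filter_ssubset.2 ⟨y, mem_univ y, lt_irrefl _⟩)).trans_eq (card_fin C)

lemma sortedDesc_nonneg (hπ : ∀ y, 0 ≤ π y) (r : ℕ) : 0 ≤ sortedDesc π r := by
  unfold sortedDesc
  split_ifs
  exacts [hπ _, le_rfl]

lemma topSum_nonneg (hπ : ∀ y, 0 ≤ π y) (c : ℕ) : 0 ≤ topSum π c :=
  sum_nonneg fun r _ => sortedDesc_nonneg π hπ r

end Ranking

lemma measure_topSet {C : ℕ} {π : Fin C → ℝ} (hπ : ∀ y, 0 ≤ π y) (hinj : Function.Injective π)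
    {μ : Measure (Fin C)} (hμ : ∀ y, μ {y} = ENNReal.ofReal (π y)) (c : ℕ) :
    μ (topSet π c) = ENNReal.ofReal (topSum π c) := by
  rw [← sum_measure_singleton, ← sum_topSet π hinj, ENNReal.ofReal_sum_of_nonneg fun y _ => hπ y]
  simp only [hμ]

section Quantile

variable {C : ℕ} (π : Fin C → ℝ) {τ : ℝ}

lemma one_le_of_le_topSum {c : ℕ} (hτ0 : 0 < τ) (hτ : τ ≤ topSum π c) : 1 ≤ c := by
  by_contra! hc
  obtain rfl : c = 0 := by omega
  simp only [topSum, range_zero, sum_empty] at hτ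
  linarith

lemma one_le_Lgen_and_le_topSum (hτ0 : 0 < τ) (hτ : τ ≤ topSum π C) :
    1 ≤ Lgen π τ ∧ τ ≤ topSum π (Lgen π τ) :=
  Nat.sInf_mem (s := {c | 1 ≤ c ∧ τ ≤ topSum π c}) ⟨C, one_le_of_le_topSum π hτ0 hτ, hτ⟩

lemma Lgen_le (hτ0 : 0 < τ) (hτ : τ ≤ topSum π C) : Lgen π τ ≤ C :=
  Nat.sInf_le ⟨one_le_of_le_topSum π hτ0 hτ, hτ⟩

lemma topSum_pred_Lgen_lt (hτ0 : 0 < τ) : topSum π (Lgen π τ - 1) < τ := by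
  by_contra! h
  rcases Nat.eq_zero_or_pos (Lgen π τ - 1) with h0 | hpred
  · simp only [h0, topSum, range_zero, sum_empty] at h
    linarith
  · have hle : Lgen π τ ≤ Lgen π τ - 1 := Nat.sInf_le ⟨hpred, h⟩
    omega

lemma topSum_succ (c : ℕ) : topSum π (c + 1) = topSum π c + sortedDesc π c :=
  sum_range_succ _ _

lemma topSum_Lgen (hτ0 : 0 < τ) (hτ : τ ≤ topSum π C) :
    topSum π (Lgen π τ) = topSum π (Lgen π τ - 1) + sortedDesc π (Lgen π τ - 1) := by
  rw [← topSum_succ, Nat.sub_add_cancel (one_le_Lgen_and_le_topSum π hτ0 hτ).1]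

lemma sortedDesc_pred_Lgen_pos (hpos : ∀ y, 0 < π y) (hτ0 : 0 < τ) (hτ : τ ≤ topSum π C) :
    0 < sortedDesc π (Lgen π τ - 1) := by
  have := Lgen_le π hτ0 hτ
  have := (one_le_Lgen_and_le_topSum π hτ0 hτ).1
  rw [sortedDesc, dif_pos (by omega)]
  exact hpos _

lemma Vgen_mem_Icc (hpos : ∀ y, 0 < π y) (hτ0 : 0 < τ) (hτ : τ ≤ topSum π C) :
    Vgen π τ ∈ Set.Icc (0 : ℝ) 1 := by
  have hp := sortedDesc_pred_Lgen_pos π hpos hτ0 hτ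
  have h1 := (one_le_Lgen_and_le_topSum π hτ0 hτ).2
  have h2 := topSum_pred_Lgen_lt π hτ0
  rw [topSum_Lgen π hτ0 hτ] at h1
  rw [Vgen, topSum_Lgen π hτ0 hτ]
  constructor
  · exact div_nonneg (by linarith) hp.le
  · rw [div_le_one hp]
    linarith

lemma topSum_pred_Lgen_mul_Vgen_add (hpos : ∀ y, 0 < π y) (hτ0 : 0 < τ)
    (hτ : τ ≤ topSum π C) :
    topSum π (Lgen π τ - 1) * Vgen π τ + topSum π (Lgen π τ) * (1 - Vgen π τ) = τ := by
  have hp := sortedDesc_pred_Lgen_pos π hpos hτ0 hτ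
  rw [Vgen, topSum_Lgen π hτ0 hτ]
  field_simp
  ring

end Quantile

lemma prod_uniform_setOf_mem_ite {α : Type*} [MeasurableSpace α] (μ : Measure α)
    {A B : Set α} (hB : MeasurableSet B) {v : ℝ} (hv : v ∈ Set.Icc (0 : ℝ) 1) :
    (μ.prod (volume.restrict (Set.Icc (0 : ℝ) 1))) {p | p.1 ∈ if p.2 ≤ v then A else B}
      = μ A * ENNReal.ofReal v + μ B * ENNReal.ofReal (1 - v) := by
  have hsplit : {p : α × ℝ | p.1 ∈ if p.2 ≤ v then A else B}
      = A ×ˢ Set.Iic v ∪ B ×ˢ Set.Ioi v := by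
    ext ⟨x, u⟩
    by_cases hu : u ≤ v <;> simp [hu, lt_of_not_ge]
  have hdisj : Disjoint (A ×ˢ Set.Iic v) (B ×ˢ Set.Ioi v) :=
    Set.disjoint_prod.2 (Or.inr (Set.Iic_disjoint_Ioi le_rfl))
  have hIic : Set.Iic v ∩ Set.Icc 0 1 = Set.Icc 0 v := by
    ext; simp only [Set.mem_inter_iff, Set.mem_Iic, Set.mem_Icc]; grind
  have hIoi : Set.Ioi v ∩ Set.Icc 0 1 = Set.Ioc v 1 := by
    ext; simp only [Set.mem_inter_iff, Set.mem_Ioi, Set.mem_Icc, Set.mem_Ioc]; grind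
  rw [hsplit, measure_union hdisj (hB.prod measurableSet_Ioi), Measure.prod_prod,
    Measure.prod_prod, Measure.restrict_apply' measurableSet_Icc,
    Measure.restrict_apply' measurableSet_Icc, hIic, hIoi, Real.volume_Icc, Real.volume_Ioc,
    sub_zero]

/-- If `Y ~ π` and `U ~ Uniform(0,1)` independently, the randomized oracle set
`S(U; π, τ)` contains `Y` with probability exactly `τ`. -/
theorem oracle_coverage {C : ℕ} (π : Fin C → ℝ)
    (hpos : ∀ y, 0 < π y) (hsum : ∑ y, π y = 1) (hinj : Function.Injective π)
    (τ : ℝ) (hτ : τ ∈ Set.Ioc (0 : ℝ) 1)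
    (μ : Measure (Fin C)) (hμ : ∀ y, μ {y} = ENNReal.ofReal (π y)) :
    (μ.prod (volume.restrict (Set.Icc (0 : ℝ) 1)))
        {p : Fin C × ℝ | p.1 ∈ Sgen p.2 π τ} = ENNReal.ofReal τ := by
  obtain ⟨hτ0, hτ1⟩ := hτ
  have hτC : τ ≤ topSum π C := by
    rwa [← sum_topSet π hinj, topSet_of_le π le_rfl, hsum]
  have hV := Vgen_mem_Icc π hpos hτ0 hτC
  have hnonneg : ∀ c, 0 ≤ topSum π c := topSum_nonneg π fun y => (hpos y).le
  have hS : {p : Fin C × ℝ | p.1 ∈ Sgen p.2 π τ} = {p | p.1 ∈ if p.2 ≤ Vgen π τ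
      then (topSet π (Lgen π τ - 1) : Set (Fin C)) else topSet π (Lgen π τ)} := by
    ext p
    by_cases hp : p.2 ≤ Vgen π τ <;> simp [Sgen, hp]
  rw [hS, prod_uniform_setOf_mem_ite μ (Finset.measurableSet _) hV,
    measure_topSet (fun y => (hpos y).le) hinj hμ, measure_topSet (fun y => (hpos y).le) hinj hμ,
    ← ENNReal.ofReal_mul (hnonneg _), ← ENNReal.ofReal_mul (hnonneg _),
    ← ENNReal.ofReal_add (mul_nonneg (hnonneg _) hV.1) (mul_nonneg (hnonneg _) (sub_nonneg.2 hV.2)),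
    topSum_pred_Lgen_mul_Vgen_add π hpos hτ0 hτC]
end
end

section
/- The randomized oracle sets are nested in distribution: for τ ≤ τ', and the same uniform variable U, S(U;π,τ) ⊆ S(U;π,τ'). -/
open MeasureTheory Finset

noncomputable section

/-!
`L(π, τ)` is nondecreasing in `τ`. If it jumps, `S(u; π, τ)` lies in the top `L(π, τ)` labels,
which lie in the top `L(π, τ') - 1` labels, which lie in `S(u; π, τ')`. If it does not jump,
`V(π, τ)` is nonincreasing in `τ` (its numerator decreases, its denominator is a fixed
probability), so `u ≤ V(π, τ')` forces `u ≤ V(π, τ)` and the smaller set is chosen at `τ` too.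
-/

namespace Oracle

variable {C : ℕ} (π : Fin C → ℝ)

lemma topSet_mono {c c' : ℕ} (h : c ≤ c') : topSet π c ⊆ topSet π c' := by
  intro y hy
  simp only [topSet, mem_filter, mem_univ, true_and] at hy ⊢
  omega

lemma topSum_self : topSum π C = ∑ y, π y := by
  rw [topSum, ← Fin.sum_univ_eq_sum_range]
  have hsorted (i : Fin C) : sortedDesc π i = π (Tuple.sort π (Fin.rev i)) := by
    simp [sortedDesc, i.isLt]
  simp_rw [hsorted]
  exact Equiv.sum_comp (Fin.revPerm.trans (Tuple.sort π)) π

lemma sortedDesc_nonneg (hpos : ∀ y, 0 ≤ π y) (r : ℕ) : 0 ≤ sortedDesc π r := by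
  unfold sortedDesc
  split
  · exact hpos _
  · exact le_rfl

lemma Lgen_mono {τ τ' : ℝ} (hle : τ ≤ τ') {c : ℕ} (hc : 1 ≤ c) (hτ' : τ' ≤ topSum π c) :
    Lgen π τ ≤ Lgen π τ' := by
  have hmem : Lgen π τ' ∈ {c : ℕ | 1 ≤ c ∧ τ' ≤ topSum π c} := Nat.sInf_mem ⟨c, hc, hτ'⟩
  exact Nat.sInf_le ⟨hmem.1, hle.trans hmem.2⟩

lemma Vgen_le_Vgen_of_Lgen_eq (hpos : ∀ y, 0 ≤ π y) {τ τ' : ℝ} (hle : τ ≤ τ')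
    (hL : Lgen π τ = Lgen π τ') : Vgen π τ' ≤ Vgen π τ := by
  unfold Vgen
  rw [← hL]
  exact div_le_div_of_nonneg_right (by linarith) (sortedDesc_nonneg π hpos _)

lemma Sgen_subset_topSet_Lgen (u τ : ℝ) : Sgen u π τ ⊆ topSet π (Lgen π τ) := by
  unfold Sgen
  split
  · exact topSet_mono π (Nat.sub_le _ 1)
  · exact subset_rfl

lemma topSet_Lgen_sub_one_subset_Sgen (u τ : ℝ) : topSet π (Lgen π τ - 1) ⊆ Sgen u π τ := by
  unfold Sgen
  split
  · exact subset_rfl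
  · exact topSet_mono π (Nat.sub_le _ 1)

lemma Sgen_subset_of_Lgen_lt (u : ℝ) {τ τ' : ℝ} (hlt : Lgen π τ < Lgen π τ') :
    Sgen u π τ ⊆ Sgen u π τ' :=
  (Sgen_subset_topSet_Lgen π u τ).trans <|
    (topSet_mono π (by omega)).trans (topSet_Lgen_sub_one_subset_Sgen π u τ')

lemma Sgen_subset_of_Lgen_eq (u : ℝ) {τ τ' : ℝ} (hL : Lgen π τ = Lgen π τ')
    (hV : Vgen π τ' ≤ Vgen π τ) : Sgen u π τ ⊆ Sgen u π τ' := by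
  by_cases hu' : u ≤ Vgen π τ'
  · simp [Sgen, hu', hu'.trans hV, hL]
  · have hS' : Sgen u π τ' = topSet π (Lgen π τ) := by rw [Sgen, if_neg hu', hL]
    rw [hS']
    exact Sgen_subset_topSet_Lgen π u τ

end Oracle

open Oracle in
theorem oracle_nested_general {C : ℕ} (π : Fin C → ℝ)
    (hpos : ∀ y, 0 < π y) (hsum : ∑ y, π y = 1)
    (τ τ' : ℝ) (hτ' : τ' ∈ Set.Ioc (0 : ℝ) 1)
    (hle : τ ≤ τ') (u : ℝ) :
    Sgen u π τ ⊆ Sgen u π τ' := by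
  have hC : 1 ≤ C := by
    rcases Nat.eq_zero_or_pos C with rfl | hC
    · simp at hsum
    · exact hC
  have hτ'_le : τ' ≤ topSum π C := by rw [topSum_self, hsum]; exact hτ'.2
  rcases (Lgen_mono π hle hC hτ'_le).lt_or_eq with hlt | hL
  · exact Sgen_subset_of_Lgen_lt π u hlt
  · exact Sgen_subset_of_Lgen_eq π u hL
      (Vgen_le_Vgen_of_Lgen_eq π (fun y => (hpos y).le) hle hL)

/-- The randomized oracle sets are nested: for `τ ≤ τ'` and the same uniform
realization `u`, `S(u; π, τ) ⊆ S(u; π, τ')`. -/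
theorem oracle_nested {C : ℕ} (π : Fin C → ℝ)
    (hpos : ∀ y, 0 < π y) (hsum : ∑ y, π y = 1) (hinj : Function.Injective π)
    (τ τ' : ℝ) (hτ : τ ∈ Set.Ioc (0 : ℝ) 1) (hτ' : τ' ∈ Set.Ioc (0 : ℝ) 1)
    (hle : τ ≤ τ') (u : ℝ) (hu : u ∈ Set.Icc (0 : ℝ) 1) :
    Sgen u π τ ⊆ Sgen u π τ' :=
  oracle_nested_general π hpos hsum τ τ' hτ' hle u
end
end

section
/- If Y is drawn from the probability vector π and U ~ Uniform(0,1) independently, then the generalized inverse quantile conformity score E(Y,U;π) is uniformly distributed on [0,1]. -/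
open MeasureTheory Finset

noncomputable section

/-! For `u ∈ (0, 1]` the score has the closed form `E(y, u) = a_y + (1 - u) π_y`, where
`a_y = π_(1) + ... + π_(k)` is the mass of the `k` labels more likely than `y`: the oracle set
grows through the labels in decreasing order of probability as `τ` increases, and `y` enters it
once `τ` exceeds `a_y + (1 - u) π_y`. Given `Y = y`, the score is thus uniform on
`[a_y, a_y + π_y]`, and as `y` runs over the labels these intervals tile `[0, 1]`. So `P[E ≤ τ]`
is the sum over `y` of the length of `[a_y, a_y + π_y] ∩ (-∞, τ]`, which telescopes to `τ`. -/

open Function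

lemma MeasureTheory.Measure.prod_apply_eq_sum {α β : Type*} [Fintype α] [MeasurableSpace α]
    [MeasurableSingletonClass α] [MeasurableSpace β] (μ : Measure α) (ν : Measure β) [SFinite ν]
    {s : Set (α × β)} (hs : MeasurableSet s) :
    μ.prod ν s = ∑ a, μ {a} * ν (Prod.mk a ⁻¹' s) := by
  simp only [Measure.prod_apply hs, lintegral_fintype, mul_comm]

lemma ofReal_mul_volume_Icc_affine_le {p : ℝ} (hp : 0 < p) (a τ : ℝ) :
    ENNReal.ofReal p * volume.restrict (Set.Icc (0 : ℝ) 1) {u | a + (1 - u) * p ≤ τ}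
      = ENNReal.ofReal (min τ (a + p) - min τ a) := by
  have hcond : ∀ u, a + (1 - u) * p ≤ τ ↔ 1 - (τ - a) / p ≤ u := fun u => by
    rw [sub_le_comm, le_div_iff₀ hp]
    constructor <;> intro <;> linarith
  have hset : {u | a + (1 - u) * p ≤ τ} ∩ Set.Icc 0 1 = Set.Icc (max (1 - (τ - a) / p) 0) 1 := by
    ext u
    simp only [Set.mem_inter_iff, Set.mem_ofPred_eq, hcond, Set.mem_Icc, max_le_iff]
    tauto
  rw [Measure.restrict_apply' measurableSet_Icc, hset, Real.volume_Icc, ← ENNReal.ofReal_mul hp.le]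
  have hτa : p * ((τ - a) / p) = τ - a := mul_div_cancel₀ _ hp.ne'
  rcases le_total τ a with h | h
  · rw [min_eq_left (h.trans (le_add_of_nonneg_right hp.le)), min_eq_left h, sub_self,
      ENNReal.ofReal_zero, ENNReal.ofReal_eq_zero]
    nlinarith [le_max_left (1 - (τ - a) / p) 0]
  rw [min_eq_right h]
  congr 1
  rcases le_total ((τ - a) / p) 1 with ht | ht
  · have : τ ≤ a + p := by rw [div_le_one hp] at ht; linarith
    rw [max_eq_left (by linarith), min_eq_left this]
    linarith
  · have : a + p ≤ τ := by rw [one_le_div hp] at ht; linarith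
    rw [max_eq_right (by linarith), min_eq_right this]
    ring

lemma ENNReal.sum_range_ofReal_sub_of_monotone {f : ℕ → ℝ} (hf : Monotone f) (n : ℕ) :
    ∑ r ∈ range n, ENNReal.ofReal (f (r + 1) - f r) = ENNReal.ofReal (f n - f 0) := by
  rw [← ENNReal.ofReal_sum_of_nonneg fun r _ => sub_nonneg.2 (hf r.le_succ), sum_range_sub]

namespace ConformalScore

variable {C : ℕ} {π : Fin C → ℝ}

def rankEquiv (π : Fin C → ℝ) : Fin C ≃ Fin C := Fin.revPerm.trans (Tuple.sort π)

lemma sortedDesc_eq (r : Fin C) : sortedDesc π r = π (rankEquiv π r) := by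
  rw [sortedDesc, dif_pos r.isLt]; rfl

lemma nAbove_rankEquiv (hinj : Injective π) (r : Fin C) : nAbove π (rankEquiv π r) = r := by
  have hs : StrictMono (π ∘ Tuple.sort π) :=
    (Tuple.monotone_sort π).strictMono_of_injective (hinj.comp (Equiv.injective _))
  have himg : univ.filter (fun y => π (rankEquiv π r) < π y)
      = (Finset.Ioi (Fin.rev r)).map (Tuple.sort π).toEmbedding := by
    ext y
    obtain ⟨j, rfl⟩ := (Tuple.sort π).surjective y
    simpa [rankEquiv] using hs.lt_iff_lt
  rw [nAbove, himg, card_map, Fin.card_Ioi, Fin.val_rev]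
  omega

lemma nAbove_lt (y : Fin C) : nAbove π y < C := by
  simpa [nAbove] using card_lt_card (filter_ssubset.mpr ⟨y, mem_univ y, lt_irrefl (π y)⟩)

lemma sortedDesc_nAbove (hinj : Injective π) (y : Fin C) : sortedDesc π (nAbove π y) = π y := by
  obtain ⟨r, rfl⟩ := (rankEquiv π).surjective y
  rw [nAbove_rankEquiv hinj, sortedDesc_eq]

lemma sum_comp_nAbove {M : Type*} [AddCommMonoid M] (hinj : Injective π) (g : ℕ → M) :
    ∑ y, g (nAbove π y) = ∑ r ∈ range C, g r := by
  rw [← Fin.sum_univ_eq_sum_range, ← (rankEquiv π).sum_comp]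
  simp only [nAbove_rankEquiv hinj]

lemma topSum_succ (c : ℕ) : topSum π (c + 1) = topSum π c + sortedDesc π c :=
  sum_range_succ _ _

lemma topSum_succ_nAbove (hinj : Injective π) (y : Fin C) :
    topSum π (nAbove π y + 1) = topSum π (nAbove π y) + π y := by
  rw [topSum_succ, sortedDesc_nAbove hinj]

lemma topSum_card (hinj : Injective π) : topSum π C = ∑ y, π y := by
  simp only [← sortedDesc_nAbove hinj, sum_comp_nAbove hinj, topSum]

lemma topSum_mono (hπ : ∀ y, 0 ≤ π y) : Monotone (topSum π) := by
  refine monotone_nat_of_le_succ fun c => ?_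
  rw [topSum_succ]
  unfold sortedDesc
  split_ifs <;> simp [hπ]

lemma topSum_nonneg (hπ : ∀ y, 0 ≤ π y) (c : ℕ) : 0 ≤ topSum π c :=
  (topSum_mono hπ (Nat.zero_le c)).trans' (by simp [topSum])

lemma Lgen_spec {τ : ℝ} {c : ℕ} (hc : 1 ≤ c) (hτ : τ ≤ topSum π c) :
    1 ≤ Lgen π τ ∧ τ ≤ topSum π (Lgen π τ) :=
  Nat.sInf_mem (s := {c : ℕ | 1 ≤ c ∧ τ ≤ topSum π c}) ⟨c, hc, hτ⟩

lemma Lgen_le {τ : ℝ} {c : ℕ} (hc : 1 ≤ c) (hτ : τ ≤ topSum π c) : Lgen π τ ≤ c :=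
  Nat.sInf_le ⟨hc, hτ⟩

lemma mem_topSet {y : Fin C} {c : ℕ} : y ∈ topSet π c ↔ nAbove π y < c := by
  simp [topSet]

def cumScore (π : Fin C → ℝ) (y : Fin C) (u : ℝ) : ℝ :=
  topSum π (nAbove π y) + (1 - u) * π y

lemma mem_Sgen_iff (hpos : ∀ y, 0 < π y) (hsum : ∑ y, π y = 1) (hinj : Injective π)
    {y : Fin C} {u τ : ℝ} (hu : u ∈ Set.Icc 0 1) (hτ : τ ≤ 1) :
    y ∈ Sgen u π τ ↔ cumScore π y u < τ := by
  have hπ : ∀ y, 0 ≤ π y := fun y => (hpos y).le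
  have hC : 1 ≤ C := Fin.pos y
  obtain ⟨hL, hτL⟩ := Lgen_spec (π := π) (τ := τ) hC (by rwa [topSum_card hinj, hsum])
  have hsucc := topSum_succ_nAbove hinj y
  rw [Sgen, apply_ite (y ∈ ·), mem_topSet, mem_topSet, cumScore]
  rcases lt_trichotomy (nAbove π y + 1) (Lgen π τ) with hlt | heq | hgt
  · have : topSum π (nAbove π y + 1) < τ :=
      lt_of_not_ge fun h => (Lgen_le (Nat.le_add_left 1 _) h).not_gt hlt
    simp only [show nAbove π y < Lgen π τ - 1 by omega, show nAbove π y < Lgen π τ by omega,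
      ite_self, true_iff]
    nlinarith [hpos y, hu.1]
  · have hV : Vgen π τ = (topSum π (nAbove π y + 1) - τ) / π y := by
      rw [Vgen, ← heq, Nat.add_sub_cancel, sortedDesc_nAbove hinj]
    rw [← heq, Nat.add_sub_cancel, hV]
    split_ifs with h <;> rw [le_div_iff₀ (hpos y)] at h
    · simp only [lt_irrefl, false_iff, not_lt]
      linarith
    · simp only [lt_add_one, true_iff]
      linarith
  · have : τ ≤ topSum π (nAbove π y) := hτL.trans (topSum_mono hπ (by omega))
    simp only [show ¬ nAbove π y < Lgen π τ - 1 by omega, show ¬ nAbove π y < Lgen π τ by omega,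
      ite_self, false_iff, not_lt]
    nlinarith [hpos y, hu.2]

lemma cumScore_nonneg (hpos : ∀ y, 0 < π y) (y : Fin C) {u : ℝ} (hu : u ≤ 1) :
    0 ≤ cumScore π y u :=
  add_nonneg (topSum_nonneg (fun y => (hpos y).le) _) (mul_nonneg (by linarith) (hpos y).le)

lemma cumScore_lt_one (hpos : ∀ y, 0 < π y) (hsum : ∑ y, π y = 1) (hinj : Injective π)
    (y : Fin C) {u : ℝ} (hu : 0 < u) : cumScore π y u < 1 := by
  have : topSum π (nAbove π y + 1) ≤ 1 := by
    rw [← hsum, ← topSum_card hinj]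
    exact topSum_mono (fun y => (hpos y).le) (nAbove_lt y)
  rw [cumScore]
  nlinarith [topSum_succ_nAbove hinj y, hpos y]

lemma Egen_eq_cumScore (hpos : ∀ y, 0 < π y) (hsum : ∑ y, π y = 1) (hinj : Injective π)
    (y : Fin C) {u : ℝ} (hu : u ∈ Set.Ioc 0 1) : Egen y u π = cumScore π y u := by
  have hset : {τ | τ ∈ Set.Icc (0 : ℝ) 1 ∧ y ∈ Sgen u π τ} = Set.Ioc (cumScore π y u) 1 := by
    ext τ
    simp only [Set.mem_ofPred_eq, Set.mem_Icc, Set.mem_Ioc]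
    constructor
    · rintro ⟨⟨-, hτ⟩, hy⟩
      exact ⟨(mem_Sgen_iff hpos hsum hinj (Set.Ioc_subset_Icc_self hu) hτ).mp hy, hτ⟩
    · rintro ⟨hy, hτ⟩
      exact ⟨⟨(cumScore_nonneg hpos y hu.2).trans hy.le, hτ⟩,
        (mem_Sgen_iff hpos hsum hinj (Set.Ioc_subset_Icc_self hu) hτ).mpr hy⟩
  rw [Egen, hset, csInf_Ioc (cumScore_lt_one hpos hsum hinj y hu.1)]

lemma Egen_ae_eq_cumScore (hpos : ∀ y, 0 < π y) (hsum : ∑ y, π y = 1) (hinj : Injective π)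
    (μ : Measure (Fin C)) :
    ∀ᵐ p ∂μ.prod (volume.restrict (Set.Icc (0 : ℝ) 1)), Egen p.1 p.2 π = cumScore π p.1 p.2 := by
  have hU : ∀ᵐ u ∂volume.restrict (Set.Icc (0 : ℝ) 1), u ∈ Set.Ioc (0 : ℝ) 1 := by
    rw [Measure.restrict_congr_set Ioc_ae_eq_Icc.symm]
    exact ae_restrict_mem measurableSet_Ioc
  filter_upwards [Measure.quasiMeasurePreserving_snd.ae hU] with p hp
  exact Egen_eq_cumScore hpos hsum hinj p.1 hp

end ConformalScore

open ConformalScore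

/-- If `Y ~ π` and `U ~ Uniform(0,1)` independently, the generalized inverse
quantile conformity score `E(Y, U; π)` is uniformly distributed on `[0, 1]`:
`P[E(Y,U;π) ≤ τ] = τ` for all `τ ∈ [0, 1]`. -/
theorem score_uniformly_distributed {C : ℕ} (π : Fin C → ℝ)
    (hpos : ∀ y, 0 < π y) (hsum : ∑ y, π y = 1) (hinj : Function.Injective π)
    (μ : Measure (Fin C)) (hμ : ∀ y, μ {y} = ENNReal.ofReal (π y))
    (τ : ℝ) (hτ : τ ∈ Set.Icc (0 : ℝ) 1) :
    (μ.prod (volume.restrict (Set.Icc (0 : ℝ) 1)))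
        {p : Fin C × ℝ | Egen p.1 p.2 π ≤ τ} = ENNReal.ofReal τ := by
  have hae : {p : Fin C × ℝ | Egen p.1 p.2 π ≤ τ}
      =ᵐ[μ.prod (volume.restrict (Set.Icc (0 : ℝ) 1))] {p | cumScore π p.1 p.2 ≤ τ} := by
    refine Filter.eventuallyEq_set.2 ?_
    filter_upwards [Egen_ae_eq_cumScore hpos hsum hinj μ] with p hp
    simp only [hp]
  have hmeas : MeasurableSet {p : Fin C × ℝ | cumScore π p.1 p.2 ≤ τ} :=
    measurableSet_le (by unfold cumScore; fun_prop) measurable_const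
  have hmono : Monotone fun r => min τ (topSum π r) :=
    fun _ _ h => min_le_min_left τ (topSum_mono (fun y => (hpos y).le) h)
  rw [measure_congr hae, Measure.prod_apply_eq_sum _ _ hmeas]
  calc _ = ∑ y, ENNReal.ofReal
        (min τ (topSum π (nAbove π y + 1)) - min τ (topSum π (nAbove π y))) := by
        refine sum_congr rfl fun y _ => ?_
        rw [hμ, topSum_succ_nAbove hinj]
        exact ofReal_mul_volume_Icc_affine_le (hpos y) (topSum π (nAbove π y)) τ
    _ = ∑ r ∈ range C, ENNReal.ofReal (min τ (topSum π (r + 1)) - min τ (topSum π r)) :=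
        sum_comp_nAbove hinj fun r => ENNReal.ofReal (min τ (topSum π (r + 1)) - min τ (topSum π r))
    _ = ENNReal.ofReal τ := by
        rw [ENNReal.sum_range_ofReal_sub_of_monotone hmono, topSum_card hinj, hsum]
        simp [topSum, hτ.1, hτ.2]
end
end

section
/- Split-conformal coverage (Theorem 1, lower bound): if the scores E_1,...,E_m, E_{n+1} computed on the calibration set and the test point are exchangeable real random variables, then the prediction set that includes the test label whenever its score is at most the ⌈(1-α)(m+1)⌉-th smallest calibration score has coverage at least 1-α. -/
/-!
Let `R_j` be the number of scores strictly below `E_j` and `k = ⌈(1-α)(m+1)⌉ ≤ m + 1`. For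
any values of the scores, the indices of the `k` smallest of them all have `R_j < k`, so the events
`{R_j < k}` have probabilities summing to at least `k`. Exchangeability gives them all the same
probability, hence `P(R_{m+1} < k) ≥ k / (m+1) ≥ 1 - α`. Finally, fewer than `k` calibration
scores below `E_{m+1}` means that `E_{m+1}` is at most the `k`-th smallest of them.
-/

open MeasureTheory Finset

noncomputable section

open scoped ENNReal

section Rank

variable {α : Type*} [LinearOrder α]

def countBelow {ι : Type*} [Fintype ι] (v : ι → α) (j : ι) : ℕ := #{i | v i < v j}

lemma countBelow_comp_perm {ι : Type*} [Fintype ι] (v : ι → α) (σ : Equiv.Perm ι) (j : ι) :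
    countBelow (v ∘ σ) j = countBelow v (σ j) :=
  card_equiv σ (by simp)

lemma countBelow_last {m : ℕ} (v : Fin (m + 1) → α) :
    countBelow v (Fin.last m) = #{i : Fin m | v i.castSucc < v (Fin.last m)} := by
  rw [countBelow, Fin.univ_castSuccEmb, filter_cons, if_neg (lt_irrefl _), filter_map, card_map]
  rfl

lemma lt_card_filter_lt_iff_apply_sort_lt {n : ℕ} (v : Fin n → α) (q : Fin n) (a : α) :
    q < #{i | v i < a} ↔ v (Tuple.sort v q) < a := by
  rw [← card_equiv (Tuple.sort v) (t := {i | v i < a}) (s := {i | (v ∘ Tuple.sort v) i < a})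
    (by simp)]
  exact Tuple.lt_card_lt_iff_apply_lt_of_monotone (Tuple.monotone_sort v)

lemma countBelow_sort_le {n : ℕ} (v : Fin n → α) (q : Fin n) :
    countBelow v (Tuple.sort v q) ≤ q :=
  not_lt.mp fun h => lt_irrefl _ ((lt_card_filter_lt_iff_apply_sort_lt v q _).mp h)

lemma le_card_countBelow_lt {n k : ℕ} (v : Fin n → α) (hk : k ≤ n) :
    k ≤ #{j | countBelow v j < k} := by
  calc k = #{q : Fin n | q < k} := by rw [Fin.card_filter_val_lt, min_eq_right hk]
    _ ≤ #{j | countBelow v j < k} :=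
      card_le_card_of_injOn (Tuple.sort v)
        (fun q hq => by simpa using (countBelow_sort_le v q).trans_lt (by simpa using hq))
        (Tuple.sort v).injective.injOn

end Rank

lemma coe_le_kthSmallest_of_card_lt {n k : ℕ} (Z : Fin n → ℝ) {x : ℝ}
    (h : #{i | Z i < x} < k) :
    (x : EReal) ≤ kthSmallest Z k := by
  unfold kthSmallest
  split_ifs with hk
  · rw [EReal.coe_le_coe_iff]
    by_contra! hlt
    have := (lt_card_filter_lt_iff_apply_sort_lt Z _ x).mpr hlt
    simp only at this
    omega
  · exact le_top

section Exchangeable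

variable {Ω ι : Type*} [MeasurableSpace Ω] {μ : Measure Ω} [Fintype ι]

lemma natCast_mul_measure_univ_le_sum {A : ι → Set Ω} [∀ j, DecidablePred (· ∈ A j)]
    (hA : ∀ j, MeasurableSet (A j)) {k : ℕ} (h : ∀ ω, k ≤ #{j | ω ∈ A j}) :
    k * μ Set.univ ≤ ∑ j, μ (A j) := by
  calc (k : ℝ≥0∞) * μ Set.univ = ∫⁻ _, (k : ℝ≥0∞) ∂μ := (lintegral_const _).symm
    _ ≤ ∫⁻ ω, ∑ j, (A j).indicator 1 ω ∂μ := lintegral_mono fun ω => by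
        simpa [Set.indicator_apply, Finset.sum_boole] using h ω
    _ = ∑ j, ∫⁻ ω, (A j).indicator 1 ω ∂μ :=
        lintegral_finsetSum _ fun j _ => measurable_const.indicator (hA j)
    _ = ∑ j, μ (A j) := by simp_rw [lintegral_indicator_one (hA _)]

variable {α : Type*} [LinearOrder α] [TopologicalSpace α] [OrderClosedTopology α]
  [SecondCountableTopology α] [MeasurableSpace α] [OpensMeasurableSpace α]

lemma measurable_countBelow (j : ι) : Measurable fun v : ι → α => countBelow v j := by
  simp_rw [countBelow, card_filter]
  exact Finset.measurable_sum _ fun i _ =>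
    Measurable.ite (measurableSet_lt (measurable_pi_apply i) (measurable_pi_apply j))
      measurable_const measurable_const

lemma measure_countBelow_lt_eq [DecidableEq ι] {E : ι → Ω → α}
    (hE : ∀ i, Measurable (E i))
    (hexch : ∀ σ : Equiv.Perm ι, μ.map (fun ω i => E (σ i) ω) = μ.map (fun ω i => E i ω))
    (k : ℕ) (j j' : ι) :
    μ {ω | countBelow (E · ω) j < k} = μ {ω | countBelow (E · ω) j' < k} := by
  have hS : MeasurableSet {v : ι → α | countBelow v j' < k} :=
    measurableSet_lt (measurable_countBelow j') measurable_const
  have hperm : {ω | countBelow (E · ω) j < k} =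
      (fun ω i => E (Equiv.swap j j' i) ω) ⁻¹' {v | countBelow v j' < k} := by
    ext ω
    change countBelow (E · ω) j < k ↔ countBelow ((E · ω) ∘ Equiv.swap j j') j' < k
    rw [countBelow_comp_perm, Equiv.swap_apply_right]
  rw [hperm, ← Measure.map_apply (measurable_pi_lambda _ fun i => hE _) hS, hexch,
    Measure.map_apply (measurable_pi_lambda _ hE) hS]
  rfl

end Exchangeable

/-- Split-conformal coverage (Theorem 1, lower bound, abstract form): if the
calibration scores `E 0, ..., E (m-1)` and the test score `E m` are exchangeable
real random variables, then the test score is at most the `⌈(1-α)(m+1)⌉`-th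
smallest calibration score (`+∞` if the index exceeds `m`) with probability at
least `1 - α`. -/
theorem split_conformal_coverage
    {Ω : Type*} [MeasurableSpace Ω] (ℙ : Measure Ω) [IsProbabilityMeasure ℙ]
    (m : ℕ) (E : Fin (m + 1) → Ω → ℝ) (hEmeas : ∀ i, Measurable (E i))
    (hexch : ∀ σ : Equiv.Perm (Fin (m + 1)),
      Measure.map (fun ω => fun i => E (σ i) ω) ℙ = Measure.map (fun ω => fun i => E i ω) ℙ)
    (α : ℝ) (hα : α ∈ Set.Ioo (0 : ℝ) 1) :
    ENNReal.ofReal (1 - α) ≤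
      ℙ {ω | (E (Fin.last m) ω : EReal) ≤
        kthSmallest (fun i : Fin m => E i.castSucc ω) ⌈(1 - α) * (m + 1)⌉₊} := by
  set k := ⌈(1 - α) * (m + 1)⌉₊
  set A : Fin (m + 1) → Set Ω := fun j => {ω | countBelow (E · ω) j < k}
  have hk : k ≤ m + 1 := Nat.ceil_le.mpr (by push_cast; nlinarith [hα.1])
  have hA : ∀ j, MeasurableSet (A j) := fun j =>
    measurableSet_lt ((measurable_countBelow j).comp (measurable_pi_lambda _ hEmeas))
      measurable_const
  have hcount : (k : ℝ≥0∞) ≤ (m + 1) * ℙ (A (Fin.last m)) := by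
    calc (k : ℝ≥0∞) ≤ ∑ j, ℙ (A j) := by
          simpa using natCast_mul_measure_univ_le_sum (μ := ℙ) hA
            fun ω => le_card_countBelow_lt (E · ω) hk
      _ = (m + 1) * ℙ (A (Fin.last m)) := by
          simp [A, measure_countBelow_lt_eq hEmeas hexch k _ (Fin.last m)]
  have hsub : A (Fin.last m) ⊆ {ω | (E (Fin.last m) ω : EReal) ≤
      kthSmallest (fun i : Fin m => E i.castSucc ω) k} := fun ω hω =>
    coe_le_kthSmallest_of_card_lt _ (by rwa [Set.mem_ofPred_eq, countBelow_last] at hω)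
  refine le_trans ?_ (measure_mono hsub)
  rw [← ENNReal.mul_le_mul_iff_right (a := m + 1) (by simp) (by simp)]
  calc (m + 1) * ENNReal.ofReal (1 - α) = ENNReal.ofReal ((1 - α) * (m + 1)) := by
        rw [ENNReal.ofReal_mul' (by positivity), mul_comm]; norm_cast
    _ ≤ k := ENNReal.ofReal_le_of_le_toReal (by simpa using Nat.le_ceil _)
    _ ≤ (m + 1) * ℙ (A (Fin.last m)) := hcount
end
end

section
/- Jackknife+ coverage bound (abstract form): let A be an (n+1)×(n+1) matrix of comparisons derived from exchangeable scores, where A is antisymmetric in the sense that A_{ij} = 1 − A_{ji} for i ≠ j with A_{ij} ∈ {0,1}, and the distribution of A is invariant under simultaneous permutation of rows and columns. Then P[∑_{i=1}^n A_{(n+1)i} ≥ (1-α)(n+1)] ≤ 2α. -/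
/-!
Call a vertex of a tournament on `N` vertices *strong* if it beats at least `(1 - α) N` others.
If `S` is the set of strong vertices, they win at least `|S| (1 - α) N` games, but at most
`|S| (|S| - 1) / 2` among themselves and `|S| (N - |S|)` against the rest; hence
`|S| + 1 ≤ 2 α N` whenever `S` is nonempty. Summing over all vertices, the expected number of
strong vertices is at most `2 α N`, and by exchangeability every vertex is strong with the same
probability, which is therefore at most `2 α`.
-/

open MeasureTheory Finset
open scoped ENNReal

section Tournament

variable {ι : Type*}

structure IsTournament (B : ι → ι → Bool) : Prop where
  irrefl : ∀ i, B i i = false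
  antisymm : ∀ i j, i ≠ j → B i j = !B j i

def outDegree [Fintype ι] (B : ι → ι → Bool) (k : ι) : ℕ := #{j | B k j}

theorem outDegree_relabel [Fintype ι] (B : ι → ι → Bool) (σ : Equiv.Perm ι) (k : ι) :
    outDegree (fun i j => B (σ i) (σ j)) k = outDegree B (σ k) :=
  card_equiv σ (by simp)

variable [DecidableEq ι] {B : ι → ι → Bool}

theorem IsTournament.ite_add_ite (hB : IsTournament B) (i j : ι) :
    ((if B i j then 1 else 0) + if B j i then 1 else 0 : ℕ) = if j ≠ i then 1 else 0 := by
  by_cases hij : i = j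
  · subst hij; simp [hB.irrefl]
  · cases h : B j i <;> simp [hB.antisymm i j hij, h, Ne.symm hij]

theorem IsTournament.two_mul_sum_card_wins_inside (hB : IsTournament B) (S : Finset ι) :
    2 * ∑ k ∈ S, #{j ∈ S | B k j} = #S * (#S - 1) :=
  calc 2 * ∑ k ∈ S, #{j ∈ S | B k j}
      = ∑ k ∈ S, ∑ j ∈ S, ((if B k j then 1 else 0) + if B j k then 1 else 0) := by
        simp only [card_filter, sum_add_distrib]
        rw [sum_comm (f := fun k j => if B j k then 1 else 0)]
        ring
    _ = ∑ k ∈ S, (#S - 1) := by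
        refine sum_congr rfl fun k hk => ?_
        simp only [hB.ite_add_ite, sum_boole, filter_ne', card_erase_of_mem hk, Nat.cast_id]
    _ = #S * (#S - 1) := by rw [sum_const, smul_eq_mul]

variable [Fintype ι]

theorem IsTournament.two_mul_sum_outDegree_le (hB : IsTournament B) (S : Finset ι) :
    2 * ∑ k ∈ S, outDegree B k ≤ #S * (#S - 1) + 2 * (#S * #Sᶜ) := by
  have hsplit : ∀ k, outDegree B k ≤ #{j ∈ S | B k j} + #Sᶜ := fun k =>
    calc outDegree B k ≤ #({j ∈ S | B k j} ∪ Sᶜ) := card_le_card fun j => by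
          by_cases j ∈ S <;> simp_all
      _ ≤ #{j ∈ S | B k j} + #Sᶜ := card_union_le _ _
  calc 2 * ∑ k ∈ S, outDegree B k ≤ 2 * ∑ k ∈ S, (#{j ∈ S | B k j} + #Sᶜ) := by
        gcongr with k; exact hsplit k
    _ = #S * (#S - 1) + 2 * (#S * #Sᶜ) := by
        rw [sum_add_distrib, mul_add, hB.two_mul_sum_card_wins_inside, sum_const, smul_eq_mul]

theorem IsTournament.card_le_outDegree_le (hB : IsTournament B) {α : ℝ} (hα : 0 ≤ α) :
    (#{k | (1 - α) * Fintype.card ι ≤ outDegree B k} : ℝ) ≤ 2 * α * Fintype.card ι := by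
  set S : Finset ι := {k | (1 - α) * Fintype.card ι ≤ outDegree B k}
  rcases Nat.eq_zero_or_pos #S with hS | hS
  · rw [hS, Nat.cast_zero]; positivity
  have hlower : #S * ((1 - α) * Fintype.card ι) ≤ ∑ k ∈ S, (outDegree B k : ℝ) := by
    rw [← nsmul_eq_mul, ← sum_const]
    exact sum_le_sum fun k hk => (mem_filter.mp hk).2
  have hupper := hB.two_mul_sum_outDegree_le S
  rw [card_compl] at hupper
  have hSle : #S ≤ Fintype.card ι := card_le_univ S
  have hupperR : 2 * ∑ k ∈ S, (outDegree B k : ℝ)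
      ≤ #S * (#S - 1) + 2 * (#S * (Fintype.card ι - #S)) := by
    have := (Nat.cast_le (α := ℝ)).mpr hupper
    push_cast [Nat.cast_sub hS, Nat.cast_sub hSle] at this
    exact this
  have hSpos : (0 : ℝ) < #S := by exact_mod_cast hS
  have hkey : #S * (#S + 1 : ℝ) ≤ #S * (2 * α * Fintype.card ι) := by linarith
  linarith [le_of_mul_le_mul_left hkey hSpos]

end Tournament

open Classical in
theorem sum_measure_le_of_card_le {Ω ι : Type*} [MeasurableSpace Ω] [Fintype ι] (μ : Measure Ω)
    {E : ι → Set Ω} (hE : ∀ k, MeasurableSet (E k)) {m : ℝ≥0∞}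
    (hm : ∀ ω, (#{k | ω ∈ E k} : ℝ≥0∞) ≤ m) :
    ∑ k, μ (E k) ≤ m * μ Set.univ :=
  calc ∑ k, μ (E k) = ∑ k, ∫⁻ ω, (E k).indicator 1 ω ∂μ := by
        simp only [lintegral_indicator_one (hE _)]
    _ = ∫⁻ ω, ∑ k, (E k).indicator 1 ω ∂μ :=
        (lintegral_finsetSum _ fun k _ => measurable_one.indicator (hE k)).symm
    _ = ∫⁻ ω, (#{k | ω ∈ E k} : ℝ≥0∞) ∂μ := by
        simp only [Set.indicator_apply, Pi.one_apply, sum_boole]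
    _ ≤ ∫⁻ _, m ∂μ := lintegral_mono hm
    _ = m * μ Set.univ := lintegral_const m

section Exchangeable

variable {Ω ι : Type*} [MeasurableSpace Ω] [Fintype ι] (ℙ : Measure Ω)

def IsJointlyExchangeable (A : Ω → ι → ι → Bool) : Prop :=
  ∀ σ : Equiv.Perm ι, Measure.map (fun ω => fun i j => A ω (σ i) (σ j)) ℙ = Measure.map A ℙ

variable {ℙ} {A : Ω → ι → ι → Bool}

theorem IsJointlyExchangeable.measure_preimage_relabel (hexch : IsJointlyExchangeable ℙ A)
    (hA : Measurable A)
    (σ : Equiv.Perm ι) (T : Set (ι → ι → Bool)) :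
    ℙ ((fun ω => fun i j => A ω (σ i) (σ j)) ⁻¹' T) = ℙ (A ⁻¹' T) := by
  have hσA : Measurable fun ω => fun i j => A ω (σ i) (σ j) :=
    Measurable.comp (g := fun (B : ι → ι → Bool) i j => B (σ i) (σ j)) .of_discrete hA
  rw [← Measure.map_apply hσA .of_discrete, hexch σ, Measure.map_apply hA .of_discrete]

variable [DecidableEq ι]

theorem measure_setOf_le_outDegree_eq (hA : Measurable A)
    (hexch : IsJointlyExchangeable ℙ A)
    (x : ℝ) (k k' : ι) :
    ℙ {ω | x ≤ outDegree (A ω) k} = ℙ {ω | x ≤ outDegree (A ω) k'} := by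
  have := hexch.measure_preimage_relabel hA (Equiv.swap k' k) {B | x ≤ outDegree B k'}
  simpa only [Set.preimage_ofPred_eq, outDegree_relabel, Equiv.swap_apply_left] using this

theorem measure_setOf_le_outDegree_le (hA : Measurable A) (hB : ∀ ω, IsTournament (A ω))
    (hexch : IsJointlyExchangeable ℙ A)
    [IsProbabilityMeasure ℙ] (k : ι) {α : ℝ} (hα : 0 ≤ α) :
    ℙ {ω | (1 - α) * Fintype.card ι ≤ outDegree (A ω) k} ≤ ENNReal.ofReal (2 * α) := by
  set N := Fintype.card ι
  set E : ι → Set Ω := fun j => {ω | (1 - α) * N ≤ outDegree (A ω) j}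
  have hE : ∀ j, MeasurableSet (E j) := fun j =>
    hA (.of_discrete (s := {B : ι → ι → Bool | (1 - α) * N ≤ outDegree B j}))
  have hfew : ∀ ω, (#{j | ω ∈ E j} : ℝ≥0∞) ≤ ENNReal.ofReal (2 * α * N) := fun ω => by
    rw [← ENNReal.ofReal_natCast]
    convert ENNReal.ofReal_le_ofReal ((hB ω).card_le_outDegree_le hα) using 4
    rfl
  have hN : (N : ℝ≥0∞) ≠ 0 := by simpa using (Fintype.card_pos_iff.mpr ⟨k⟩).ne'
  have hsum : N * ℙ (E k) ≤ N * ENNReal.ofReal (2 * α) :=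
    calc N * ℙ (E k) = ∑ j, ℙ (E j) := by
          simp [E, measure_setOf_le_outDegree_eq hA hexch _ _ k, N]
      _ ≤ ENNReal.ofReal (2 * α * N) * ℙ Set.univ := sum_measure_le_of_card_le ℙ hE hfew
      _ = N * ENNReal.ofReal (2 * α) := by
          rw [measure_univ, mul_one, ENNReal.ofReal_mul (by positivity), ENNReal.ofReal_natCast,
            mul_comm]
  exact (ENNReal.mul_le_mul_iff_right hN (ENNReal.natCast_ne_top _)).mp hsum

end Exchangeable

theorem card_filter_castSucc_eq {n : ℕ} {g : Fin (n + 1) → Bool} (hg : g (Fin.last n) = false) :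
    #{i : Fin n | g i.castSucc} = #{j | g j} := by
  rw [card_filter, card_filter, Fin.sum_univ_castSucc, hg]
  simp

/-- Jackknife+ coverage bound (abstract form): let `A` be a random tournament on
`{0, ..., n}` (i.e. `A ω i i = false` and `A ω i j = ¬ A ω j i` for `i ≠ j`) whose
distribution is invariant under simultaneous relabeling of the indices. Then the
probability that index `n` beats at least `(1-α)(n+1)` of the other indices is at
most `2α`. -/
theorem jackknife_plus_bound
    {Ω : Type*} [MeasurableSpace Ω] (ℙ : Measure Ω) [IsProbabilityMeasure ℙ]
    (n : ℕ) (A : Ω → Fin (n + 1) → Fin (n + 1) → Bool)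
    (hAmeas : Measurable A)
    (hirrefl : ∀ ω i, A ω i i = false)
    (hanti : ∀ ω, ∀ i j : Fin (n + 1), i ≠ j → A ω i j = !A ω j i)
    (hexch : ∀ σ : Equiv.Perm (Fin (n + 1)),
      Measure.map (fun ω => fun i j => A ω (σ i) (σ j)) ℙ = Measure.map A ℙ)
    (α : ℝ) (hα : α ∈ Set.Ioo (0 : ℝ) 1) :
    ℙ {ω | (1 - α) * (n + 1) ≤
        ((Finset.univ.filter
          (fun i : Fin n => A ω (Fin.last n) i.castSucc = true)).card : ℝ)} ≤
      ENNReal.ofReal (2 * α) := by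
  have hbound := measure_setOf_le_outDegree_le hAmeas (fun ω => ⟨hirrefl ω, hanti ω⟩) hexch
    (Fin.last n) hα.1.le
  simpa [outDegree, ← card_filter_castSucc_eq (hirrefl _ (Fin.last n))] using hbound
end
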